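/- arXiv:1609.07307 — 2 statements merged into one kernel-verified Lean document; each statement's English description precedes it below -/
import Mathlib

section
/- The set H = { diag-block matrix k₀·k₁ } where k₀ = blockdiag(z, S, z⁻¹) with z > 0 real and S ∈ SO(r,s), and k₁ is the upper-triangular matrix [[1, r, ½ r rᵗ],[0, 1, rᵗ],[0,0,1]] with r a row covector and rᵗ = (r η⁻¹)ᵀ, is a subgroup of the group of (n+2)×(n+2) matrices M satisfying Mᵀ Σ M = Σ, where Σ = [[0,0,−1],[0,η,0],[−1,0,0]] and η is the flat metric of signature (r,s), n = r+s. -/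
open Matrix

/-- Index type for the (n+2)-dimensional tractor representation: 1 ⊕ n ⊕ 1. -/
abbrev Idx (n : ℕ) := Unit ⊕ Fin n ⊕ Unit

/-- The block matrix Σ = [[0,0,−1],[0,η,0],[−1,0,0]]. -/
noncomputable def SigmaM {n : ℕ} (η : Matrix (Fin n) (Fin n) ℝ) :
    Matrix (Idx n) (Idx n) ℝ :=
  Matrix.of fun i j =>
    match i, j with
    | Sum.inl _, Sum.inr (Sum.inr _) => -1
    | Sum.inr (Sum.inr _), Sum.inl _ => -1
    | Sum.inr (Sum.inl a), Sum.inr (Sum.inl b) => η a b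
    | _, _ => 0

/-- Block diagonal matrix blockdiag(x, m, y). -/
noncomputable def bdiag {n : ℕ} (x : ℝ) (m : Matrix (Fin n) (Fin n) ℝ) (y : ℝ) :
    Matrix (Idx n) (Idx n) ℝ :=
  Matrix.of fun i j =>
    match i, j with
    | Sum.inl _, Sum.inl _ => x
    | Sum.inr (Sum.inl a), Sum.inr (Sum.inl b) => m a b
    | Sum.inr (Sum.inr _), Sum.inr (Sum.inr _) => y
    | _, _ => 0

/-- The conformal boost matrix k₁(r) = [[1, r, ½ r rᵗ],[0, 1, rᵗ],[0,0,1]],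
where `rᵗ = (r η⁻¹)ᵀ`. -/
noncomputable def k1M {n : ℕ} (η : Matrix (Fin n) (Fin n) ℝ) (r : Fin n → ℝ) :
    Matrix (Idx n) (Idx n) ℝ :=
  Matrix.of fun i j =>
    match i, j with
    | Sum.inl _, Sum.inl _ => 1
    | Sum.inl _, Sum.inr (Sum.inl b) => r b
    | Sum.inl _, Sum.inr (Sum.inr _) => (1 / 2) * (r ⬝ᵥ (r ᵥ* η⁻¹))
    | Sum.inr (Sum.inl a), Sum.inr (Sum.inl b) => if a = b then (1 : ℝ) else 0
    | Sum.inr (Sum.inl a), Sum.inr (Sum.inr _) => (r ᵥ* η⁻¹) a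
    | Sum.inr (Sum.inr _), Sum.inr (Sum.inr _) => 1
    | _, _ => 0

/- ### Auxiliary lemmas -/

lemma mulIdx {n : ℕ} (A B : Matrix (Idx n) (Idx n) ℝ) (i j : Idx n) :
    (A * B) i j = A i (Sum.inl ()) * B (Sum.inl ()) j
      + (∑ k : Fin n, A i (Sum.inr (Sum.inl k)) * B (Sum.inr (Sum.inl k)) j)
      + A i (Sum.inr (Sum.inr ())) * B (Sum.inr (Sum.inr ())) j := by
  simp [Matrix.mul_apply, Fintype.sum_sum_type]; ring

lemma bdiag_mul {n : ℕ} (x x' y y' : ℝ) (m m' : Matrix (Fin n) (Fin n) ℝ) :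
    bdiag x m y * bdiag x' m' y' = bdiag (x*x') (m*m') (y*y') := by
  ext i j
  obtain (_|a|_) := i <;> obtain (_|b|_) := j <;>
    simp [mulIdx, bdiag, Matrix.mul_apply]

lemma bdiag_one {n : ℕ} : (bdiag 1 (1 : Matrix (Fin n) (Fin n) ℝ) 1) = 1 := by
  ext i j
  obtain (_|a|_) := i <;> obtain (_|b|_) := j <;>
    simp [bdiag, Matrix.one_apply]

lemma dot_symm {n : ℕ} {η : Matrix (Fin n) (Fin n) ℝ} (hs : (η⁻¹)ᵀ = η⁻¹)
    (r s : Fin n → ℝ) : r ⬝ᵥ (s ᵥ* η⁻¹) = s ⬝ᵥ (r ᵥ* η⁻¹) := by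
  rw [← Matrix.mulVec_transpose, hs, Matrix.dotProduct_mulVec, dotProduct_comm]

lemma k1_zero {n : ℕ} (η : Matrix (Fin n) (Fin n) ℝ) : k1M η 0 = 1 := by
  ext i j
  obtain (_|a|_) := i <;> obtain (_|b|_) := j <;>
    simp [k1M, Matrix.one_apply]

lemma k1_mul {n : ℕ} {η : Matrix (Fin n) (Fin n) ℝ} (hs : (η⁻¹)ᵀ = η⁻¹)
    (r s : Fin n → ℝ) : k1M η r * k1M η s = k1M η (r + s) := by
  have key := dot_symm hs r s
  ext i j
  obtain (_|a|_) := i <;> obtain (_|b|_) := j <;>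
    simp [mulIdx, k1M, Matrix.add_vecMul, dotProduct_add, add_dotProduct] <;>
    ring_nf
  · rw [show (∑ x : Fin n, r x * (s ᵥ* η⁻¹) x) = r ⬝ᵥ (s ᵥ* η⁻¹) from rfl, key]; ring

section comm
variable {n : ℕ} {η S : Matrix (Fin n) (Fin n) ℝ}

lemma factA (hs : (η⁻¹)ᵀ = η⁻¹) (hS : S * η⁻¹ * Sᵀ = η⁻¹) (r : Fin n → ℝ) :
    S *ᵥ ((r ᵥ* S) ᵥ* η⁻¹) = r ᵥ* η⁻¹ := by
  rw [Matrix.vecMul_vecMul, ← Matrix.mulVec_transpose, Matrix.mulVec_mulVec,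
    Matrix.transpose_mul, hs, ← Matrix.mul_assoc, hS, ← hs, Matrix.mulVec_transpose, hs]

lemma factB (hs : (η⁻¹)ᵀ = η⁻¹) (hS : S * η⁻¹ * Sᵀ = η⁻¹) (r : Fin n → ℝ) :
    (r ᵥ* S) ⬝ᵥ ((r ᵥ* S) ᵥ* η⁻¹) = r ⬝ᵥ (r ᵥ* η⁻¹) := by
  rw [← Matrix.dotProduct_mulVec, factA hs hS]

lemma k1_comm (hs : (η⁻¹)ᵀ = η⁻¹) (hS : S * η⁻¹ * Sᵀ = η⁻¹) {z : ℝ} (hz : z ≠ 0)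
    (r : Fin n → ℝ) :
    k1M η r * bdiag z S z⁻¹ = bdiag z S z⁻¹ * k1M η (z⁻¹ • (r ᵥ* S)) := by
  have hA := factA hs hS r
  have hB := factB hs hS r
  have hzz : z * z⁻¹ = 1 := mul_inv_cancel₀ hz
  ext i j
  obtain (_|a|_) := i <;> obtain (_|b|_) := j <;>
    simp [mulIdx, k1M, bdiag]
  · rw [show ∑ x : Fin n, r x * S x b = (r ᵥ* S) b from rfl, ← mul_assoc, hzz, one_mul]
  · rw [Matrix.smul_vecMul, dotProduct_smul, smul_eq_mul, hB]
    field_simp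
  · rw [show (∑ x : Fin n, S a x * ((z⁻¹ • (r ᵥ* S)) ᵥ* η⁻¹) x)
        = (S *ᵥ ((z⁻¹ • (r ᵥ* S)) ᵥ* η⁻¹)) a from rfl,
      Matrix.smul_vecMul, Matrix.mulVec_smul, hA, Pi.smul_apply, smul_eq_mul]
    ring
end comm

section pres
variable {n : ℕ} {η S : Matrix (Fin n) (Fin n) ℝ}

lemma P1 {z : ℝ} (hz : z ≠ 0) (h : Sᵀ * η * S = η) :
    (bdiag z S z⁻¹)ᵀ * SigmaM η * bdiag z S z⁻¹ = SigmaM η := by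
  have hzz : z * z⁻¹ = 1 := mul_inv_cancel₀ hz
  have h' : ∀ a b, (∑ k, (∑ l, S l a * η l k) * S k b) = η a b := by
    intro a b
    have := congrFun (congrFun h a) b
    simpa [Matrix.mul_apply, Matrix.transpose_apply] using this
  ext i j
  obtain (_|a|_) := i <;> obtain (_|b|_) := j <;>
    simp [mulIdx, bdiag, SigmaM, Matrix.transpose_apply, hzz]
  · exact h' a b
  · exact inv_mul_cancel₀ hz

lemma P2 (hs : (η⁻¹)ᵀ = η⁻¹) (h1 : η * η⁻¹ = 1) (h2 : η⁻¹ * η = 1) (r : Fin n → ℝ) :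
    (k1M η r)ᵀ * SigmaM η * k1M η r = SigmaM η := by
  have hL : (r ᵥ* η⁻¹) ᵥ* η = r := by
    rw [Matrix.vecMul_vecMul, h2, Matrix.vecMul_one]
  have hR : η *ᵥ (r ᵥ* η⁻¹) = r := by
    rw [← Matrix.mulVec_transpose, Matrix.mulVec_mulVec, hs, h1, Matrix.one_mulVec]
  ext i j
  obtain (_|a|_) := i <;> obtain (_|b|_) := j <;>
    simp [mulIdx, k1M, SigmaM, Matrix.transpose_apply]
  · rw [show (∑ x, η a x * (r ᵥ* η⁻¹) x) = (η *ᵥ (r ᵥ* η⁻¹)) a from rfl, hR]; ring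
  · rw [show (∑ x, (r ᵥ* η⁻¹) x * η x b) = ((r ᵥ* η⁻¹) ᵥ* η) b from rfl, hL]; ring
  · rw [show (∑ x, (∑ x_1, (r ᵥ* η⁻¹) x_1 * η x_1 x) * (r ᵥ* η⁻¹) x)
        = ((r ᵥ* η⁻¹) ᵥ* η) ⬝ᵥ (r ᵥ* η⁻¹) from rfl, hL]; ring
end pres

section so
variable {n : ℕ} {η S : Matrix (Fin n) (Fin n) ℝ}

/-- From SᵀηS = η (with η, S invertible) derive S η⁻¹ Sᵀ = η⁻¹. -/
lemma so_inv_conj (hηinv : IsUnit η.det) (hdet : S.det = 1) (h : Sᵀ * η * S = η) :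
    S * η⁻¹ * Sᵀ = η⁻¹ := by
  have hSu : IsUnit S.det := by rw [hdet]; exact isUnit_one
  have hSTu : IsUnit Sᵀ.det := by rw [Matrix.det_transpose, hdet]; exact isUnit_one
  have e1 : S⁻¹ * (η⁻¹ * (Sᵀ)⁻¹) = η⁻¹ := by
    have := congrArg Inv.inv h
    rwa [Matrix.mul_inv_rev, Matrix.mul_inv_rev] at this
  calc S * η⁻¹ * Sᵀ
      = S * (S⁻¹ * (η⁻¹ * (Sᵀ)⁻¹) * Sᵀ) := by rw [e1, Matrix.mul_assoc]
    _ = (S * S⁻¹) * (η⁻¹ * ((Sᵀ)⁻¹ * Sᵀ)) := by simp only [Matrix.mul_assoc]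
    _ = η⁻¹ := by
        rw [Matrix.mul_nonsing_inv _ hSu, Matrix.nonsing_inv_mul _ hSTu,
          Matrix.one_mul, Matrix.mul_one]
end so

section so2
variable {n : ℕ} {η S : Matrix (Fin n) (Fin n) ℝ}

lemma so_conj_inv (hdet : S.det = 1) (h : Sᵀ * η * S = η) :
    S⁻¹ * η⁻¹ * (S⁻¹)ᵀ = η⁻¹ := by
  have e1 : S⁻¹ * (η⁻¹ * (Sᵀ)⁻¹) = η⁻¹ := by
    have := congrArg Inv.inv h
    rwa [Matrix.mul_inv_rev, Matrix.mul_inv_rev] at this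
  rw [Matrix.transpose_nonsing_inv, Matrix.mul_assoc]; exact e1

lemma so_inv (hηinv : IsUnit η.det) (hdet : S.det = 1) (h : Sᵀ * η * S = η) :
    (S⁻¹)ᵀ * η * S⁻¹ = η := by
  have hc := so_inv_conj hηinv hdet h
  have := congrArg Inv.inv hc
  rw [Matrix.mul_inv_rev, Matrix.mul_inv_rev, Matrix.nonsing_inv_nonsing_inv η hηinv] at this
  rw [Matrix.transpose_nonsing_inv, Matrix.mul_assoc]; exact this
end so2

/-- The set H = {k₀(z,S)·k₁(r)} with z > 0, S ∈ SO(r,s), r a covector, is a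
subgroup of the group of matrices M with MᵀΣM = Σ: it lies in that group,
contains the identity, and is closed under multiplication and inverse. -/
theorem stmt8 {n : ℕ} (η : Matrix (Fin n) (Fin n) ℝ)
    (hηsym : ηᵀ = η) (hηinv : IsUnit η.det) :
    let Hset : Set (Matrix (Idx n) (Idx n) ℝ) :=
      {M | ∃ (z : ℝ) (S : Matrix (Fin n) (Fin n) ℝ) (r : Fin n → ℝ),
        0 < z ∧ Sᵀ * η * S = η ∧ S.det = 1 ∧ M = bdiag z S z⁻¹ * k1M η r}
    (∀ M ∈ Hset, Mᵀ * SigmaM η * M = SigmaM η) ∧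
    (1 : Matrix (Idx n) (Idx n) ℝ) ∈ Hset ∧
    (∀ M ∈ Hset, ∀ N ∈ Hset, M * N ∈ Hset) ∧
    (∀ M ∈ Hset, M⁻¹ ∈ Hset) := by
  intro Hset
  have hs : (η⁻¹)ᵀ = η⁻¹ := by rw [Matrix.transpose_nonsing_inv, hηsym]
  have h1 : η * η⁻¹ = 1 := Matrix.mul_nonsing_inv η hηinv
  have h2 : η⁻¹ * η = 1 := Matrix.nonsing_inv_mul η hηinv
  refine ⟨?_, ?_, ?_, ?_⟩
  · rintro M ⟨z, S, r, hz, hS, hdet, rfl⟩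
    rw [Matrix.transpose_mul]
    calc (k1M η r)ᵀ * (bdiag z S z⁻¹)ᵀ * SigmaM η * (bdiag z S z⁻¹ * k1M η r)
        = (k1M η r)ᵀ * ((bdiag z S z⁻¹)ᵀ * SigmaM η * bdiag z S z⁻¹) * k1M η r := by
          simp only [Matrix.mul_assoc]
      _ = (k1M η r)ᵀ * SigmaM η * k1M η r := by rw [P1 (ne_of_gt hz) hS]
      _ = SigmaM η := P2 hs h1 h2 r
  · exact ⟨1, 1, 0, one_pos, by simp, Matrix.det_one,
      by rw [k1_zero, inv_one, bdiag_one, Matrix.mul_one]⟩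
  · rintro M ⟨z, S, r, hz, hS, hdet, rfl⟩ N ⟨w, T, t, hw, hT, hdetT, rfl⟩
    have hTc := so_inv_conj (η := η) hηinv hdetT hT
    refine ⟨z * w, S * T, w⁻¹ • (r ᵥ* T) + t, mul_pos hz hw, ?_,
      by rw [Matrix.det_mul, hdet, hdetT, one_mul], ?_⟩
    · rw [Matrix.transpose_mul]
      calc Tᵀ * Sᵀ * η * (S * T) = Tᵀ * (Sᵀ * η * S) * T := by simp only [Matrix.mul_assoc]
        _ = η := by rw [hS, hT]
    · calc bdiag z S z⁻¹ * k1M η r * (bdiag w T w⁻¹ * k1M η t)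
          = bdiag z S z⁻¹ * (k1M η r * bdiag w T w⁻¹) * k1M η t := by
            simp only [Matrix.mul_assoc]
        _ = bdiag z S z⁻¹ * (bdiag w T w⁻¹ * k1M η (w⁻¹ • (r ᵥ* T))) * k1M η t := by
            rw [k1_comm hs hTc (ne_of_gt hw) r]
        _ = (bdiag z S z⁻¹ * bdiag w T w⁻¹) * (k1M η (w⁻¹ • (r ᵥ* T)) * k1M η t) := by
            simp only [Matrix.mul_assoc]
        _ = bdiag (z * w) (S * T) ((z * w)⁻¹) * k1M η (w⁻¹ • (r ᵥ* T) + t) := by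
            rw [bdiag_mul, k1_mul hs, mul_inv]
  · rintro M ⟨z, S, r, hz, hS, hdet, rfl⟩
    have hz' : z⁻¹ ≠ 0 := inv_ne_zero (ne_of_gt hz)
    have hSu : IsUnit S.det := by rw [hdet]; exact isUnit_one
    have hc := so_conj_inv (η := η) hdet hS
    have hcomm := k1_comm hs hc hz' (-r)
    have hMN : (bdiag z S z⁻¹ * k1M η r)
        * (bdiag z⁻¹ S⁻¹ ((z⁻¹)⁻¹) * k1M η ((z⁻¹)⁻¹ • ((-r) ᵥ* S⁻¹))) = 1 := by
      rw [← hcomm]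
      calc bdiag z S z⁻¹ * k1M η r * (k1M η (-r) * bdiag z⁻¹ S⁻¹ ((z⁻¹)⁻¹))
          = bdiag z S z⁻¹ * (k1M η r * k1M η (-r)) * bdiag z⁻¹ S⁻¹ ((z⁻¹)⁻¹) := by
            simp only [Matrix.mul_assoc]
        _ = 1 := by
            rw [k1_mul hs, add_neg_cancel, k1_zero, Matrix.mul_one, bdiag_mul,
              mul_inv_cancel₀ (ne_of_gt hz), Matrix.mul_nonsing_inv _ hSu,
              mul_inv_cancel₀ hz', bdiag_one]
    rw [Matrix.inv_eq_right_inv hMN]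
    exact ⟨z⁻¹, S⁻¹, (z⁻¹)⁻¹ • ((-r) ᵥ* S⁻¹), inv_pos.2 hz,
      so_inv hηinv hdet hS, by simp [Matrix.det_nonsing_inv, hdet], rfl⟩
end

section
/- Given odd ghost v and connection ω in a graded commutative differential algebra with sω = −dv − [ω,v], sv = −½[v,v] (graded commutator), and invertible even u, define ω^u := u⁻¹ωu + u⁻¹du and v^u := u⁻¹vu + u⁻¹su. Then sω^u = −dv^u − [ω^u, v^u], i.e. the dressed fields satisfy the same BRST relation, regardless of the value of su. -/
/-- In a bigraded (super)commutator differential algebra — encoded by a grading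
involution `ε` (`ε a = (−1)^{|a|} a` on homogeneous elements), antiderivations
`d`, `s` with `ds + sd = 0`, even invertible `u`, odd `ω` (degree (1,0)) and
odd ghost `v` (degree (0,1)) — if `sω = −dv − [ω,v]` and `sv = −½[v,v] = −v²`,
then the dressed fields `ω^u := u⁻¹ωu + u⁻¹du` and `v^u := u⁻¹vu + u⁻¹su`
satisfy the same BRST relation `sω^u = −dv^u − [ω^u, v^u]`, regardless of the
value of `su`. (For odd elements the graded commutator is the anticommutator:
`[ω,v] = ωv + vω`.) -/
theorem stmt18 {A : Type*} [Ring A]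
    (ε : A →+* A) (d s : A →+ A)
    (hd_mul : ∀ a b : A, d (a * b) = d a * b + ε a * d b)
    (hs_mul : ∀ a b : A, s (a * b) = s a * b + ε a * s b)
    (hds : ∀ a : A, d (s a) = - s (d a))
    (u : Aˣ) (ω v : A)
    (hεu : ε ↑u = ↑u) (hεui : ε (↑u⁻¹ : A) = (↑u⁻¹ : A))
    (hεω : ε ω = -ω) (hεv : ε v = -v)
    (hεdu : ε (d ↑u) = -(d ↑u)) (hεsu : ε (s ↑u) = -(s ↑u))
    (hsω : s ω = - d v - (ω * v + v * ω))
    (hsv : s v = -(v * v)) :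
    s ((↑u⁻¹ : A) * ω * ↑u + (↑u⁻¹ : A) * d ↑u) =
      - d ((↑u⁻¹ : A) * v * ↑u + (↑u⁻¹ : A) * s ↑u)
      - (((↑u⁻¹ : A) * ω * ↑u + (↑u⁻¹ : A) * d ↑u) *
          ((↑u⁻¹ : A) * v * ↑u + (↑u⁻¹ : A) * s ↑u)
        + ((↑u⁻¹ : A) * v * ↑u + (↑u⁻¹ : A) * s ↑u) *
          ((↑u⁻¹ : A) * ω * ↑u + (↑u⁻¹ : A) * d ↑u)) := by
  have hau : (↑u⁻¹ : A) * ↑u = 1 := u.inv_mul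
  have hd1 : d 1 = 0 := by
    have h := hd_mul 1 1
    simp only [one_mul, mul_one, map_one] at h
    exact (left_eq_add.mp h)
  have hs1 : s 1 = 0 := by
    have h := hs_mul 1 1
    simp only [one_mul, mul_one, map_one] at h
    exact (left_eq_add.mp h)
  have hda : d (↑u⁻¹ : A) = -((↑u⁻¹ : A) * d ↑u * ↑u⁻¹) := by
    have h := hd_mul (↑u⁻¹ : A) ↑u
    rw [hau, hd1, hεui] at h
    have h2 : d (↑u⁻¹ : A) * ↑u = -((↑u⁻¹ : A) * d ↑u) :=
      eq_neg_of_add_eq_zero_left h.symm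
    calc d (↑u⁻¹ : A) = d (↑u⁻¹ : A) * ↑u * ↑u⁻¹ := by
          rw [mul_assoc, u.mul_inv, mul_one]
      _ = -((↑u⁻¹ : A) * d ↑u * ↑u⁻¹) := by rw [h2]; noncomm_ring
  have hsa : s (↑u⁻¹ : A) = -((↑u⁻¹ : A) * s ↑u * ↑u⁻¹) := by
    have h := hs_mul (↑u⁻¹ : A) ↑u
    rw [hau, hs1, hεui] at h
    have h2 : s (↑u⁻¹ : A) * ↑u = -((↑u⁻¹ : A) * s ↑u) :=
      eq_neg_of_add_eq_zero_left h.symm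
    calc s (↑u⁻¹ : A) = s (↑u⁻¹ : A) * ↑u * ↑u⁻¹ := by
          rw [mul_assoc, u.mul_inv, mul_one]
      _ = -((↑u⁻¹ : A) * s ↑u * ↑u⁻¹) := by rw [h2]; noncomm_ring
  simp only [map_add, hs_mul, hd_mul, map_mul, hεu, hεui, hεω, hεv, hεdu, hεsu,
    hsω, hds, hda, hsa]
  simp only [sub_eq_add_neg, neg_add, neg_mul, mul_neg, neg_neg, mul_assoc,
    mul_add, add_mul, Units.inv_mul_cancel_left, Units.mul_inv_cancel_left]
  abel
end
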